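/- Fix an integer t ≥ 2 and let n ≥ 2. For every integer m in the range N_n < m < N_{n+1} one has R_t(m) < R_t(N_n), where R_t(x) := Ψ_t(x)/(x log log x). -/

import Mathlib

open Finset Filter

/-- Generalized Dedekind psi function `Ψ_t(n) = n ∏_{p ∣ n} (1 + 1/p + ⋯ + 1/p^(t-1))`. -/
noncomputable def Psi (t n : ℕ) : ℝ :=
  (n : ℝ) * ∏ p ∈ n.primeFactors, ∑ i ∈ Finset.range t, (1 : ℝ) / (p : ℝ) ^ i

/-- The primorial `N_n = ∏_{k=1}^n p_k`, the product of the first `n` primes. -/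
noncomputable def primorialAt (n : ℕ) : ℕ := ∏ k ∈ Finset.range n, Nat.nth Nat.Prime k

/-- The `n`-th prime `p_n` (so `nthPrime 1 = 2`). -/
noncomputable def nthPrime (n : ℕ) : ℕ := Nat.nth Nat.Prime (n - 1)

/-- The ratio `R_t(x) = Ψ_t(x) / (x log log x)`. -/
noncomputable def Rt (t n : ℕ) : ℝ := Psi t n / ((n : ℝ) * Real.log (Real.log n))

/-- The Riemann zeta value `ζ(t) = ∑_{n ≥ 1} n^{-t}` at an integer argument. -/
noncomputable def zetaNat (t : ℕ) : ℝ := ∑' k : ℕ, 1 / ((k : ℝ) + 1) ^ t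

/-!
Since the product of `k` distinct primes is at least the primorial `N_k`, an integer
`m < N_{n+1}` has at most `n` prime factors. Each factor `1 + 1/p + ⋯ + 1/p^(t-1)` of `Ψ_t(m)/m`
is at least `1` and decreases in `p`, so `Ψ_t(m)/m ≤ Ψ_t(N_n)/N_n`. Meanwhile
`log log m > log log N_n > 0`, as `N_n ≥ 4 > e`.
-/

namespace Nat

variable {P : ℕ → Prop} [DecidablePred P]

theorem nth_card_le_of_forall_lt (hP : {x | P x}.Infinite) {s : Finset ℕ} {a : ℕ}
    (hs : ∀ x ∈ s, P x) (ha : P a) (hlt : ∀ x ∈ s, x < a) : nth P #s ≤ a := by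
  have hcount : #s ≤ count P a := by
    rw [count_eq_card_filter_range]
    exact card_le_card fun x hx => mem_filter.2 ⟨mem_range.2 (hlt x hx), hs x hx⟩
  calc nth P #s ≤ nth P (count P a) := nth_monotone hP hcount
    _ = a := nth_count ha

variable {R : Type*} [CommSemiring R] [PartialOrder R] [IsOrderedRing R]

theorem prod_range_card_nth_le_prod (hP : {x | P x}.Infinite) {f : ℕ → R}
    (hf0 : ∀ x, P x → 0 ≤ f x) (hf : MonotoneOn f {x | P x}) {s : Finset ℕ}
    (hs : ∀ x ∈ s, P x) : ∏ k ∈ range #s, f (nth P k) ≤ ∏ x ∈ s, f x := by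
  induction s using Finset.induction_on_max with
  | empty => simp
  | insert a s hlt ih =>
    have hs' : ∀ x ∈ s, P x := fun x hx => hs x (mem_insert_of_mem hx)
    have ha : P a := hs a (mem_insert_self a s)
    rw [card_insert_of_notMem fun h => (hlt a h).false, prod_range_succ,
      prod_insert fun h => (hlt a h).false, mul_comm]
    have hnth : f (nth P #s) ≤ f a :=
      hf (nth_mem_of_infinite hP _) ha (nth_card_le_of_forall_lt hP hs' ha hlt)
    exact mul_le_mul hnth (ih hs') (prod_nonneg fun k _ => hf0 _ (nth_mem_of_infinite hP k))
      (hf0 a ha)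

theorem prod_le_prod_range_card_nth (hP : {x | P x}.Infinite) {f : ℕ → R}
    (hf0 : ∀ x, P x → 0 ≤ f x) (hf : AntitoneOn f {x | P x}) {s : Finset ℕ}
    (hs : ∀ x ∈ s, P x) : ∏ x ∈ s, f x ≤ ∏ k ∈ range #s, f (nth P k) := by
  induction s using Finset.induction_on_max with
  | empty => simp
  | insert a s hlt ih =>
    have hs' : ∀ x ∈ s, P x := fun x hx => hs x (mem_insert_of_mem hx)
    have ha : P a := hs a (mem_insert_self a s)
    rw [card_insert_of_notMem fun h => (hlt a h).false, prod_range_succ,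
      prod_insert fun h => (hlt a h).false, mul_comm]
    have hnth : f a ≤ f (nth P #s) :=
      hf (nth_mem_of_infinite hP _) ha (nth_card_le_of_forall_lt hP hs' ha hlt)
    exact mul_le_mul (ih hs') hnth
      (hf0 a ha) (prod_nonneg fun k _ => hf0 _ (nth_mem_of_infinite hP k))

end Nat

noncomputable def psiFactor (t p : ℕ) : ℝ := ∑ i ∈ range t, (1 : ℝ) / (p : ℝ) ^ i

theorem Psi_eq (t n : ℕ) : Psi t n = n * ∏ p ∈ n.primeFactors, psiFactor t p := rfl

theorem one_le_psiFactor {t : ℕ} (ht : t ≠ 0) (p : ℕ) : 1 ≤ psiFactor t p := by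
  simpa [psiFactor] using single_le_sum (f := fun i => (1 : ℝ) / (p : ℝ) ^ i)
    (fun i _ => by positivity) (mem_range.2 (Nat.pos_of_ne_zero ht))

theorem psiFactor_antitoneOn (t : ℕ) : AntitoneOn (psiFactor t) (Set.Ioi 0) := by
  intro a ha b _ hab
  refine sum_le_sum fun i _ => one_div_le_one_div_of_le (pow_pos (Nat.cast_pos.2 ha) i) ?_
  exact pow_le_pow_left₀ (Nat.cast_nonneg a) (Nat.cast_le.2 hab) i

theorem Rt_eq_prod_div {t m : ℕ} (hm : m ≠ 0) :
    Rt t m = (∏ p ∈ m.primeFactors, psiFactor t p) / Real.log (Real.log m) := by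
  rw [Rt, Psi_eq, mul_div_mul_left _ _ (Nat.cast_ne_zero.2 hm)]

theorem primorialAt_pos (n : ℕ) : 0 < primorialAt n :=
  prod_pos fun k _ => (Nat.prime_nth_prime k).pos

theorem primorialAt_succ (n : ℕ) : primorialAt (n + 1) = primorialAt n * Nat.nth Nat.Prime n :=
  prod_range_succ _ n

theorem primorialAt_strictMono : StrictMono primorialAt :=
  strictMono_nat_of_lt_succ fun n => by
    rw [primorialAt_succ]
    exact lt_mul_right (primorialAt_pos n) (Nat.prime_nth_prime n).one_lt

theorem two_pow_le_primorialAt (n : ℕ) : 2 ^ n ≤ primorialAt n := by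
  simpa [primorialAt] using
    prod_le_prod' fun k (_ : k ∈ range n) => (Nat.prime_nth_prime k).two_le

theorem primeFactors_primorialAt (n : ℕ) :
    (primorialAt n).primeFactors = (range n).image (Nat.nth Nat.Prime) := by
  have hinj : Set.InjOn (Nat.nth Nat.Prime) (range n) :=
    (Nat.nth_injective Nat.infinite_setOfPred_prime).injOn
  have hprod : primorialAt n = ∏ p ∈ (range n).image (Nat.nth Nat.Prime), p :=
    (prod_image (f := id) hinj).symm
  rw [hprod, Nat.primeFactors_prod]
  simp only [mem_image]
  rintro _ ⟨k, _, rfl⟩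
  exact Nat.prime_nth_prime k

theorem Rt_primorialAt (t n : ℕ) :
    Rt t (primorialAt n) = (∏ k ∈ range n, psiFactor t (Nat.nth Nat.Prime k)) /
      Real.log (Real.log (primorialAt n)) := by
  rw [Rt_eq_prod_div (primorialAt_pos n).ne',
    primeFactors_primorialAt, prod_image (Nat.nth_injective Nat.infinite_setOfPred_prime).injOn]

theorem primorialAt_card_le_prod {s : Finset ℕ} (hs : ∀ p ∈ s, p.Prime) :
    primorialAt #s ≤ ∏ p ∈ s, p :=
  Nat.prod_range_card_nth_le_prod Nat.infinite_setOfPred_prime (fun _ _ => Nat.zero_le _)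
    (monotone_id.monotoneOn _) hs

theorem card_primeFactors_le_of_lt_primorialAt {m n : ℕ} (hm : m < primorialAt (n + 1)) :
    #m.primeFactors ≤ n := by
  by_contra! h
  have hm0 : m ≠ 0 := by rintro rfl; simp at h
  refine hm.not_ge ?_
  calc primorialAt (n + 1) ≤ primorialAt #m.primeFactors := primorialAt_strictMono.monotone h
    _ ≤ ∏ p ∈ m.primeFactors, p :=
      primorialAt_card_le_prod fun _ => Nat.prime_of_mem_primeFactors
    _ ≤ m := Nat.le_of_dvd (Nat.pos_of_ne_zero hm0) (Nat.prod_primeFactors_dvd m)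

theorem prod_psiFactor_le_of_card_le {t n : ℕ} (ht : t ≠ 0) {s : Finset ℕ}
    (hs : ∀ p ∈ s, p.Prime) (hcard : #s ≤ n) :
    ∏ p ∈ s, psiFactor t p ≤ ∏ k ∈ range n, psiFactor t (Nat.nth Nat.Prime k) :=
  calc ∏ p ∈ s, psiFactor t p ≤ ∏ k ∈ range #s, psiFactor t (Nat.nth Nat.Prime k) :=
      Nat.prod_le_prod_range_card_nth Nat.infinite_setOfPred_prime
        (fun _ _ => zero_le_one.trans (one_le_psiFactor ht _))
        ((psiFactor_antitoneOn t).mono fun _ hp => Nat.Prime.pos hp) hs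
    _ ≤ ∏ k ∈ range n, psiFactor t (Nat.nth Nat.Prime k) :=
      prod_le_prod_of_subset_of_one_le (range_subset_range.2 hcard)
        (fun _ _ => zero_le_one.trans (one_le_psiFactor ht _)) fun _ _ _ => one_le_psiFactor ht _

theorem Rt_lt_Rt_primorial (t n : ℕ) (ht : 2 ≤ t) (hn : 2 ≤ n)
    (m : ℕ) (hm1 : primorialAt n < m) (hm2 : m < primorialAt (n + 1)) :
    Rt t m < Rt t (primorialAt n) := by
  have ht0 : t ≠ 0 := by omega
  have hN : (4 : ℝ) ≤ primorialAt n := by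
    exact_mod_cast (Nat.pow_le_pow_right two_pos hn).trans (two_pow_le_primorialAt n)
  have hNm : (primorialAt n : ℝ) < m := by exact_mod_cast hm1
  have hlogN : 1 < Real.log (primorialAt n) := by
    rw [Real.lt_log_iff_exp_lt (by linarith)]
    linarith [Real.exp_one_lt_d9]
  have hloglogN : 0 < Real.log (Real.log (primorialAt n)) := Real.log_pos hlogN
  have hloglog : Real.log (Real.log (primorialAt n)) < Real.log (Real.log m) :=
    Real.log_lt_log (by linarith) (Real.log_lt_log (by linarith) hNm)
  have hprod := prod_psiFactor_le_of_card_le ht0 (fun _ => Nat.prime_of_mem_primeFactors)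
    (card_primeFactors_le_of_lt_primorialAt hm2)
  rw [Rt_eq_prod_div (by omega), Rt_primorialAt]
  calc (∏ p ∈ m.primeFactors, psiFactor t p) / Real.log (Real.log m)
      ≤ (∏ k ∈ range n, psiFactor t (Nat.nth Nat.Prime k)) / Real.log (Real.log m) :=
        div_le_div_of_nonneg_right hprod (hloglogN.trans hloglog).le
    _ < (∏ k ∈ range n, psiFactor t (Nat.nth Nat.Prime k)) /
          Real.log (Real.log (primorialAt n)) :=
        div_lt_div_of_pos_left (prod_pos fun _ _ => zero_lt_one.trans_le (one_le_psiFactor ht0 _))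
          hloglogN hloglog
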